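/- Let np be the map from games over L5 to normal-play combinatorial games (pregames) that replaces every atom by the normal-play game 0 = { | } while keeping the tree of left and right options. For all games G and H over L5 that have mean 0, G ≤ H holds (in the sense of games over L5) if and only if np(G) ≤ np(H) holds in normal-play combinatorial game theory. -/

import Mathlib

universe u

/-- Conway pregames (formerly Mathlib's `SetTheory.PGame`, removed from Mathlib). -/
inductive SetTheory.PGame : Type (u + 1)
  | mk : ∀ α β : Type u, (α → SetTheory.PGame) → (β → SetTheory.PGame) → SetTheory.PGame

namespace SetTheory.PGame

/-- The zero pregame `{ | }`. -/
instance : Zero SetTheory.PGame.{u} := ⟨SetTheory.PGame.mk PEmpty PEmpty PEmpty.elim PEmpty.elim⟩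

/-- Simultaneous definition of `≤` and `⧏` on pregames (as in Mathlib's former `PGame.le_lf`):
`x ≤ y` iff `∀ i, xL i ⧏ y` and `∀ j, x ⧏ yR j`; `x ⧏ y` iff `∃ i, x ≤ yL i` or `∃ j, xR j ≤ y`. -/
noncomputable def leLf : SetTheory.PGame.{u} → SetTheory.PGame.{u} → Prop × Prop
  | mk _ _ xL xR, y =>
    SetTheory.PGame.rec (motive := fun _ => Prop × Prop)
      (fun _ _ yL yR ihL ihR =>
        ((∀ i, (leLf (xL i) (mk _ _ yL yR)).2) ∧ ∀ j, (ihR j).2,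
          (∃ i, (ihL i).1) ∨ ∃ j, (leLf (xR j) (mk _ _ yL yR)).1)) y

/-- The order `≤` on pregames. -/
instance : LE SetTheory.PGame.{u} := ⟨fun x y => (leLf x y).1⟩

end SetTheory.PGame

/-- Combinatorial games over a poset `A` of atoms: either an atomic game `[a]` for an atom
`a : A`, or a composite game `⟨L|R⟩` where `L` and `R` are nonempty families of games
(the left and right options). -/
inductive PoGame (A : Type u) : Type (u + 1) where
  | atom : A → PoGame A
  | mk : (xl xr : Type u) → (xl → PoGame A) → (xr → PoGame A) →
      Nonempty xl → Nonempty xr → PoGame A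

namespace PoGame

variable {A : Type u}

/-- `G` is an atomic game. -/
def IsAtomic : PoGame A → Prop
  | atom _ => True
  | mk _ _ _ _ _ _ => False

/-- `G` is a left option of the game given as second argument. -/
def IsLeftOption (G : PoGame A) : PoGame A → Prop
  | atom _ => False
  | mk _ _ L _ _ _ => ∃ i, L i = G

/-- `G` is a right option of the game given as second argument. -/
def IsRightOption (G : PoGame A) : PoGame A → Prop
  | atom _ => False
  | mk _ _ _ R _ _ => ∃ j, R j = G

section Order

variable [PartialOrder A]

mutual
  /-- `Le G H` is the relation `G ≤ H` on games over the poset `A`, defined by mutual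
  recursion with `Lf` (the relation `G ⊲ H`): `G ≤ H` iff every left option `G^L`
  satisfies `G^L ⊲ H`, every right option `H^R` satisfies `G ⊲ H^R`, and if `G` or `H`
  is atomic then `G ⊲ H`. -/
  inductive Le : PoGame A → PoGame A → Prop
    | intro (G H : PoGame A)
        (hL : ∀ G', IsLeftOption G' G → Lf G' H)
        (hR : ∀ H', IsRightOption H' H → Lf G H')
        (hA : IsAtomic G ∨ IsAtomic H → Lf G H) : Le G H

  /-- `Lf G H` is the relation `G ⊲ H` on games over the poset `A`: it holds iff some
  right option `G^R` satisfies `G^R ≤ H`, or some left option `H^L` satisfies `G ≤ H^L`,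
  or `G = [a]` and `H = [b]` are atomic with `a ≤ b` in `A`. -/
  inductive Lf : PoGame A → PoGame A → Prop
    | rightOption (G H G' : PoGame A) (h : IsRightOption G' G) (hle : Le G' H) : Lf G H
    | leftOption (G H H' : PoGame A) (h : IsLeftOption H' H) (hle : Le G H') : Lf G H
    | atom (a b : A) (hab : a ≤ b) : Lf (atom a) (atom b)
end

/-- Two games are equivalent if `G ≤ H` and `H ≤ G`. -/
def GEquiv (G H : PoGame A) : Prop := Le G H ∧ Le H G

/-- `G` is locally monotone if `G ≤ G^L` for every left option `G^L` and `G^R ≤ G` for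
every right option `G^R`. -/
def LocallyMonotone (G : PoGame A) : Prop :=
  (∀ G', IsLeftOption G' G → Le G G') ∧ (∀ G', IsRightOption G' G → Le G' G)

/-- `G` is an option (left or right) of `H`. -/
def IsOption (G H : PoGame A) : Prop := IsLeftOption G H ∨ IsRightOption G H

/-- `G` is a position of `H`: `H` itself, an option of `H`, an option of an option, etc. -/
def IsPosition (G H : PoGame A) : Prop := Relation.ReflTransGen IsOption G H

/-- `G` is monotone if every position of `G` is locally monotone. -/
def Monotone (G : PoGame A) : Prop := ∀ K, IsPosition K G → LocallyMonotone K

end Order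

/-- The 5-element linearly ordered set `L5 = {-3, -2, -1, 0, 1}`. -/
abbrev L5 : Type := {a : ℤ // -3 ≤ a ∧ a ≤ 1}

/-- `G` has mean `C`: an atomic game `[a]` has mean `a`, and a composite game has mean `C`
iff every left option has mean `C + 1` and every right option has mean `C - 1`. -/
def HasMean : PoGame L5 → ℤ → Prop
  | atom a, C => (a : ℤ) = C
  | mk _ _ L R _ _, C => (∀ i, HasMean (L i) (C + 1)) ∧ (∀ j, HasMean (R j) (C - 1))

/-- The game `⟨G | H⟩` with a single left option `G` and a single right option `H`. -/
def ofPair (G H : PoGame A) : PoGame A :=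
  mk PUnit PUnit (fun _ => G) (fun _ => H) ⟨PUnit.unit⟩ ⟨PUnit.unit⟩

/-- `⋆ = ⟨-1 | -3⟩`. -/
def star : PoGame L5 := ofPair (atom ⟨-1, by norm_num⟩) (atom ⟨-3, by norm_num⟩)

/-- `M(G) = ⟨1 | G⟩`. -/
def M (G : PoGame L5) : PoGame L5 := ofPair (atom ⟨1, by norm_num⟩) G

/-- `P(G) = ⟨G | -2⟩`. -/
def P (G : PoGame L5) : PoGame L5 := ofPair G (atom ⟨-2, by norm_num⟩)

/-- `P⋆(G) = ⟨G | ⋆⟩`. -/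
def Pstar (G : PoGame L5) : PoGame L5 := ofPair G star

/-- `Pn n G = P G` if `n` is odd, `P⋆ G` if `n` is even. -/
def Pn (n : ℕ) (G : PoGame L5) : PoGame L5 := if Odd n then P G else Pstar G

/-- The sequence `G_0 = [0]`, `G_{n+1} = M (Pn n (G_n))`. -/
def Gseq : ℕ → PoGame L5
  | 0 => atom ⟨0, by norm_num⟩
  | n + 1 => M (Pn n (Gseq n))

/-- The normal-play game obtained from a game over `L5` by replacing every atom by the
normal-play game `0 = { | }`, keeping the tree of left and right options. -/
def np : PoGame L5 → SetTheory.PGame.{0}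
  | atom _ => 0
  | mk xl xr L R _ _ => SetTheory.PGame.mk xl xr (fun i => np (L i)) (fun j => np (R j))

end PoGame

/-!
A left move raises the mean by one and a right move lowers it by one, so the means alone settle
the easy comparisons: `G ≤ H` when the mean of `G` is smaller, `G ⊲ H` when it is not larger.
Hence the atomic clause of `G ≤ H` holds automatically when the means are equal, and that of
`G ⊲ H` fails when the mean of `G` exceeds that of `H` by one. The recursive definitions of `≤`
and `⊲` only pass between these two situations, and in them both relations unfold exactly as in
normal play with every atom replaced by `0`.
-/

namespace SetTheory.PGame

def LF (x y : SetTheory.PGame.{u}) : Prop := (leLf x y).2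

infix:50 " ⧏ " => SetTheory.PGame.LF

theorem zero_def : (0 : PGame.{u}) = mk PEmpty PEmpty PEmpty.elim PEmpty.elim :=
  rfl

theorem mk_le_mk {xl xr yl yr : Type u} {xL : xl → PGame} {xR : xr → PGame}
    {yL : yl → PGame} {yR : yr → PGame} :
    mk xl xr xL xR ≤ mk yl yr yL yR ↔
      (∀ i, xL i ⧏ mk yl yr yL yR) ∧ ∀ j, mk xl xr xL xR ⧏ yR j :=
  Iff.rfl

theorem mk_lf_mk {xl xr yl yr : Type u} {xL : xl → PGame} {xR : xr → PGame}
    {yL : yl → PGame} {yR : yr → PGame} :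
    mk xl xr xL xR ⧏ mk yl yr yL yR ↔
      (∃ i, mk xl xr xL xR ≤ yL i) ∨ ∃ j, xR j ≤ mk yl yr yL yR :=
  Iff.rfl

end SetTheory.PGame

namespace PoGame

open SetTheory

variable {A : Type u}

theorem isOption_wellFounded : WellFounded (IsOption : PoGame A → PoGame A → Prop) := by
  refine ⟨fun G => ?_⟩
  induction G with
  | atom a => exact ⟨_, fun G' h => by rcases h with h | h <;> exact h.elim⟩
  | mk _ _ L R _ _ ihL ihR =>
    refine ⟨_, fun G' h => ?_⟩
    rcases h with ⟨i, rfl⟩ | ⟨j, rfl⟩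
    exacts [ihL i, ihR j]

theorem induction₂ {motive : PoGame A → PoGame A → Prop}
    (step : ∀ G H, (∀ G', IsOption G' G → motive G' H) →
      (∀ H', IsOption H' H → motive G H') → motive G H)
    (G H : PoGame A) : motive G H :=
  Prod.GameAdd.recursion isOption_wellFounded isOption_wellFounded
    (fun G H ih => step G H (fun G' h => ih G' H (.fst h)) (fun H' h => ih G H' (.snd h))) G H

section Order

variable [PartialOrder A]

theorem le_iff {G H : PoGame A} :
    Le G H ↔ (∀ G', IsLeftOption G' G → Lf G' H) ∧ (∀ H', IsRightOption H' H → Lf G H') ∧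
      (IsAtomic G ∨ IsAtomic H → Lf G H) :=
  ⟨fun ⟨_, _, hL, hR, hA⟩ => ⟨hL, hR, hA⟩, fun ⟨hL, hR, hA⟩ => .intro G H hL hR hA⟩

theorem lf_iff {G H : PoGame A} :
    Lf G H ↔ (∃ G', IsRightOption G' G ∧ Le G' H) ∨ (∃ H', IsLeftOption H' H ∧ Le G H') ∨
      ∃ a b, G = atom a ∧ H = atom b ∧ a ≤ b := by
  constructor
  · rintro (⟨_, _, G', h, hle⟩ | ⟨_, _, H', h, hle⟩ | ⟨a, b, hab⟩)
    exacts [.inl ⟨G', h, hle⟩, .inr (.inl ⟨H', h, hle⟩), .inr (.inr ⟨a, b, rfl, rfl, hab⟩)]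
  · rintro (⟨G', h, hle⟩ | ⟨H', h, hle⟩ | ⟨a, b, rfl, rfl, hab⟩)
    exacts [.rightOption G H G' h hle, .leftOption G H H' h hle, .atom a b hab]

end Order

theorem HasMean.of_isLeftOption {G G' : PoGame L5} {C : ℤ} (h : HasMean G C)
    (h' : IsLeftOption G' G) : HasMean G' (C + 1) := by
  cases G with
  | atom => exact h'.elim
  | mk _ _ L R _ _ => obtain ⟨i, rfl⟩ := h'; exact h.1 i

theorem HasMean.of_isRightOption {G G' : PoGame L5} {C : ℤ} (h : HasMean G C)
    (h' : IsRightOption G' G) : HasMean G' (C - 1) := by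
  cases G with
  | atom => exact h'.elim
  | mk _ _ L R _ _ => obtain ⟨j, rfl⟩ := h'; exact h.2 j

theorem le_and_lf_of_hasMean (G H : PoGame L5) {CG CH : ℤ} (hG : HasMean G CG)
    (hH : HasMean H CH) : (CG < CH → Le G H) ∧ (CG ≤ CH → Lf G H) := by
  induction G, H using induction₂ generalizing CG CH with
  | step G H ihG ihH =>
  have lf : CG ≤ CH → Lf G H := fun hle => by
    cases G with
    | mk _ _ L R _ hne =>
      obtain ⟨j⟩ := hne
      exact .rightOption _ _ (R j) ⟨j, rfl⟩
        ((ihG _ (.inr ⟨j, rfl⟩) (hG.2 j) hH).1 (by omega))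
    | atom a =>
      cases H with
      | mk _ _ L R hne _ =>
        obtain ⟨i⟩ := hne
        exact .leftOption _ _ (L i) ⟨i, rfl⟩
          ((ihH _ (.inl ⟨i, rfl⟩) hG (hH.1 i)).1 (by omega))
      | atom b =>
        exact .atom a b (Subtype.coe_le_coe.mp (hG.trans_le (hle.trans_eq hH.symm)))
  refine ⟨fun hlt => le_iff.2 ⟨fun G' h => ?_, fun H' h => ?_, fun _ => lf hlt.le⟩, lf⟩
  · exact (ihG G' (.inl h) (hG.of_isLeftOption h) hH).2 (by omega)
  · exact (ihH H' (.inr h) hG (hH.of_isRightOption h)).2 (by omega)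

theorem np_le_np_iff {G H : PoGame L5} : np G ≤ np H ↔
    (∀ G', IsLeftOption G' G → np G' ⧏ np H) ∧ ∀ H', IsRightOption H' H → np G ⧏ np H' := by
  cases G <;> cases H <;> simp [np, PGame.zero_def, IsLeftOption, IsRightOption, PGame.mk_le_mk]

theorem np_lf_np_iff {G H : PoGame L5} : np G ⧏ np H ↔
    (∃ H', IsLeftOption H' H ∧ np G ≤ np H') ∨ ∃ G', IsRightOption G' G ∧ np G' ≤ np H := by
  cases G <;> cases H <;> simp [np, PGame.zero_def, IsLeftOption, IsRightOption, PGame.mk_lf_mk]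

theorem le_iff_np_le_and_lf_iff_np_lf (G H : PoGame L5) {CG CH : ℤ} (hG : HasMean G CG)
    (hH : HasMean H CH) :
    (CG = CH → (Le G H ↔ np G ≤ np H)) ∧ (CG = CH + 1 → (Lf G H ↔ np G ⧏ np H)) := by
  induction G, H using induction₂ generalizing CG CH with
  | step G H ihG ihH =>
  constructor
  · intro hC
    have atomic_lf : IsAtomic G ∨ IsAtomic H → Lf G H :=
      fun _ => (le_and_lf_of_hasMean G H hG hH).2 hC.le
    rw [le_iff, np_le_np_iff, iff_true_intro atomic_lf, and_true]
    exact and_congr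
      (forall₂_congr fun G' h => (ihG G' (.inl h) (hG.of_isLeftOption h) hH).2 (by omega))
      (forall₂_congr fun H' h => (ihH H' (.inr h) hG (hH.of_isRightOption h)).2 (by omega))
  · intro hC
    have not_atoms : ¬∃ a b, G = atom a ∧ H = atom b ∧ a ≤ b := by
      rintro ⟨a, b, rfl, rfl, hab⟩
      have : (a : ℤ) ≤ b := hab
      have : (a : ℤ) = CG := hG
      have : (b : ℤ) = CH := hH
      omega
    rw [lf_iff, np_lf_np_iff, or_iff_left not_atoms, or_comm]
    exact or_congr
      (exists_congr fun H' => and_congr_right fun h =>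
        (ihH H' (.inl h) hG (hH.of_isLeftOption h)).1 (by omega))
      (exists_congr fun G' => and_congr_right fun h =>
        (ihG G' (.inr h) (hG.of_isRightOption h) hH).1 (by omega))

end PoGame

open PoGame in
/-- For games `G`, `H` over `L5` of mean `0`, `G ≤ H` holds iff `np G ≤ np H` holds for
the associated normal-play games. -/
theorem stmt_18 (G H : PoGame L5) (hG : HasMean G 0) (hH : HasMean H 0) :
    Le G H ↔ np G ≤ np H :=
  (le_iff_np_le_and_lf_iff_np_lf G H hG hH).1 rfl
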